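/- arXiv:1211.0635 — 2 statements merged into one kernel-verified Lean document; each statement's English description precedes it below -/
import Mathlib

section
/- Let D : ℝⁿ → ℝⁿ be a diagonal linear map with all diagonal entries d₁,…,dₙ strictly positive, and suppose there is a function c : ℝⁿ → (0,∞) such that g₀(Dx)(Dv,Dw) = c(x) · g₀(x)(v,w) for all x,v,w ∈ ℝⁿ. Then there exists λ = (α,β) ∈ ℝ² such that D = φ_λ, i.e. (d₁,…,dₙ) = (e^{−α+2β}, e^{3α}, e^{2α−β}, e^{3β}, e^{α+β}, …, e^{α+β}), and c is constant equal to e^{2(α+β)}. -/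
/-- The symmetric bilinear form `g₀(x)(v,w) = v₁w₂ + v₂w₁ + x₃²v₁w₁ + v₃w₄ + v₄w₃
    + Σ_{j=5}^{n} ε_j v_j w_j` (1-based indices; here indices are 0-based),
    where `ε_j = 1` for positions `5 ≤ j ≤ 4+s` and `ε_j = -1` otherwise. -/
def g0 (n : ℕ) (hn : 4 ≤ n) (s : ℕ) (x v w : Fin n → ℝ) : ℝ :=
  v ⟨0, by omega⟩ * w ⟨1, by omega⟩ + v ⟨1, by omega⟩ * w ⟨0, by omega⟩
    + (x ⟨2, by omega⟩) ^ 2 * v ⟨0, by omega⟩ * w ⟨0, by omega⟩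
    + v ⟨2, by omega⟩ * w ⟨3, by omega⟩ + v ⟨3, by omega⟩ * w ⟨2, by omega⟩
    + ∑ j : Fin n, if 4 ≤ (j : ℕ) then
        (if (j : ℕ) < 4 + s then (1 : ℝ) else -1) * v j * w j else 0

/-- The diagonal entries of the linear map `φ_λ`, `λ = (α,β)`:
`(e^{-α+2β}, e^{3α}, e^{2α-β}, e^{3β}, e^{α+β}, …, e^{α+β})` (0-based position `j`). -/
noncomputable def phiDiag (α β : ℝ) (j : ℕ) : ℝ :=
  if j = 0 then Real.exp (-α + 2 * β)
  else if j = 1 then Real.exp (3 * α)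
  else if j = 2 then Real.exp (2 * α - β)
  else if j = 3 then Real.exp (3 * β)
  else Real.exp (α + β)

/-! Testing the conformality identity on pairs of standard basis vectors gives
`c x = d₀d₁ = d₂d₃`, `(d₀d₂)² = c 1` and `d_j² = c x` for `j ≥ 4` (the sign `±1` cancels), so
`c` is constant. In logarithms these are linear equations in `log dᵢ`, solved by
`3α = log d₁`, `3β = log d₃`. -/

open Real

section Basis

variable {n : ℕ} {hn : 4 ≤ n} {s : ℕ} {x : Fin n → ℝ} {a b : ℝ}

lemma sum_tail_single_left (u : Fin n) (w : Fin n → ℝ) :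
    (∑ j : Fin n, if 4 ≤ (j : ℕ) then
        (if (j : ℕ) < 4 + s then (1 : ℝ) else -1) * (Pi.single u a : Fin n → ℝ) j * w j else 0)
      = if 4 ≤ (u : ℕ) then (if (u : ℕ) < 4 + s then (1 : ℝ) else -1) * a * w u else 0 := by
  rw [Finset.sum_eq_single u (fun j _ hj => by simp [Pi.single_eq_of_ne hj]) (by simp)]
  simp

lemma g0_single_zero_one :
    g0 n hn s x (Pi.single ⟨0, by omega⟩ a) (Pi.single ⟨1, by omega⟩ b) = a * b := by
  rw [g0, sum_tail_single_left]
  simp [Fin.ext_iff]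

lemma g0_single_two_three :
    g0 n hn s x (Pi.single ⟨2, by omega⟩ a) (Pi.single ⟨3, by omega⟩ b) = a * b := by
  rw [g0, sum_tail_single_left]
  simp [Fin.ext_iff]

lemma g0_single_zero_zero :
    g0 n hn s x (Pi.single ⟨0, by omega⟩ a) (Pi.single ⟨0, by omega⟩ b)
      = x ⟨2, by omega⟩ ^ 2 * a * b := by
  rw [g0, sum_tail_single_left]
  simp [Fin.ext_iff]

lemma g0_single_single_of_four_le (u : Fin n) (hu : 4 ≤ (u : ℕ)) :
    g0 n hn s x (Pi.single u a) (Pi.single u b)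
      = (if (u : ℕ) < 4 + s then (1 : ℝ) else -1) * a * b := by
  have hu' : ∀ k (hk : k < 4), u ≠ ⟨k, by omega⟩ := fun k hk => Fin.ne_of_val_ne (by simp; omega)
  rw [g0, sum_tail_single_left]
  simp [hu, hu']

end Basis

def IsConformalDiagonal (n : ℕ) (hn : 4 ≤ n) (s : ℕ) (d : Fin n → ℝ)
    (c : (Fin n → ℝ) → ℝ) : Prop :=
  ∀ x v w : Fin n → ℝ,
    g0 n hn s (fun j => d j * x j) (fun j => d j * v j) (fun j => d j * w j)
      = c x * g0 n hn s x v w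

namespace IsConformalDiagonal

variable {n : ℕ} {hn : 4 ≤ n} {s : ℕ} {d : Fin n → ℝ} {c : (Fin n → ℝ) → ℝ}

lemma apply_single (h : IsConformalDiagonal n hn s d c) (x : Fin n → ℝ) (u v : Fin n) :
    g0 n hn s (fun j => d j * x j) (Pi.single u (d u)) (Pi.single v (d v))
      = c x * g0 n hn s x (Pi.single u 1) (Pi.single v 1) := by
  have hsingle : ∀ u, (fun j => d j * (Pi.single u (1 : ℝ) : Fin n → ℝ) j) = Pi.single u (d u) :=
    fun u => by ext j; rcases eq_or_ne j u with rfl | hj <;> simp [*]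
  rw [← hsingle, ← hsingle]
  exact h x _ _

lemma factor_eq_mul_zero_one (h : IsConformalDiagonal n hn s d c) (x : Fin n → ℝ) :
    c x = d ⟨0, by omega⟩ * d ⟨1, by omega⟩ := by
  have := h.apply_single x ⟨0, by omega⟩ ⟨1, by omega⟩
  rw [g0_single_zero_one, g0_single_zero_one] at this
  linear_combination -this

lemma factor_eq_mul_two_three (h : IsConformalDiagonal n hn s d c) (x : Fin n → ℝ) :
    c x = d ⟨2, by omega⟩ * d ⟨3, by omega⟩ := by
  have := h.apply_single x ⟨2, by omega⟩ ⟨3, by omega⟩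
  rw [g0_single_two_three, g0_single_two_three] at this
  linear_combination -this

lemma sq_mul_zero_two_eq_factor (h : IsConformalDiagonal n hn s d c) :
    (d ⟨0, by omega⟩ * d ⟨2, by omega⟩) ^ 2 = c 1 := by
  have := h.apply_single 1 ⟨0, by omega⟩ ⟨0, by omega⟩
  simp only [g0_single_zero_zero, Pi.one_apply] at this
  linear_combination this

lemma sq_eq_factor_of_four_le (h : IsConformalDiagonal n hn s d c) (x : Fin n → ℝ)
    (u : Fin n) (hu : 4 ≤ (u : ℕ)) : d u ^ 2 = c x := by
  have := h.apply_single x u u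
  simp only [g0_single_single_of_four_le u hu] at this
  split_ifs at this
  · linear_combination this
  · linear_combination -this

end IsConformalDiagonal

lemma phiDiag_of_four_le (α β : ℝ) {j : ℕ} (hj : 4 ≤ j) : phiDiag α β j = exp (α + β) := by
  simp [phiDiag, show j ≠ 0 by omega, show j ≠ 1 by omega, show j ≠ 2 by omega,
    show j ≠ 3 by omega]

lemma exists_phiDiag_of_mul_eq {d₀ d₁ d₂ d₃ : ℝ} (h₀ : 0 < d₀) (h₁ : 0 < d₁) (h₂ : 0 < d₂)
    (h₃ : 0 < d₃) (h₂₃ : d₂ * d₃ = d₀ * d₁) (h₀₂ : (d₀ * d₂) ^ 2 = d₀ * d₁) :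
    ∃ α β : ℝ, d₀ = phiDiag α β 0 ∧ d₁ = phiDiag α β 1 ∧ d₂ = phiDiag α β 2 ∧
      d₃ = phiDiag α β 3 ∧ d₀ * d₁ = exp (2 * (α + β)) := by
  have l₂₃ : log d₂ + log d₃ = log d₀ + log d₁ := by
    rw [← log_mul h₂.ne' h₃.ne', ← log_mul h₀.ne' h₁.ne', h₂₃]
  have l₀₂ : 2 * (log d₀ + log d₂) = log d₀ + log d₁ := by
    rw [← log_mul h₀.ne' h₂.ne', ← log_mul h₀.ne' h₁.ne', ← h₀₂, log_pow, Nat.cast_ofNat]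
  have eq_exp {d t : ℝ} (hd : 0 < d) (h : log d = t) : d = exp t :=
    (exp_log hd).symm.trans (congrArg exp h)
  refine ⟨log d₁ / 3, log d₃ / 3, eq_exp h₀ ?_, eq_exp h₁ ?_, eq_exp h₂ ?_, eq_exp h₃ ?_,
    eq_exp (mul_pos h₀ h₁) ?_⟩
  all_goals (try rw [log_mul h₀.ne' h₁.ne']); linarith

lemma eq_exp_of_sq_eq_exp {d t : ℝ} (hd : 0 < d) (h : d ^ 2 = exp (2 * t)) : d = exp t := by
  rwa [mul_comm, exp_mul, rpow_two, pow_left_inj₀ hd.le (exp_pos t).le two_ne_zero] at h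

/-- Any diagonal linear map `D` with positive diagonal entries which is conformal for `g₀`
    (with some positive factor `c`) is of the form `φ_λ` for some `λ = (α,β) ∈ ℝ²`,
    and the factor is the constant `e^{2(α+β)}`. -/
theorem diagonal_conformal_eq_phi (p q : ℕ) (hp : 2 ≤ p) (hq : 2 < q)
    (d : Fin (p + q) → ℝ) (hd : ∀ j, 0 < d j)
    (c : (Fin (p + q) → ℝ) → ℝ)
    (h : ∀ x v w : Fin (p + q) → ℝ,
      g0 (p + q) (by omega) (q - 2)
          (fun j => d j * x j) (fun j => d j * v j) (fun j => d j * w j)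
        = c x * g0 (p + q) (by omega) (q - 2) x v w) :
    ∃ α β : ℝ, (∀ j : Fin (p + q), d j = phiDiag α β (j : ℕ)) ∧
      (∀ x : Fin (p + q) → ℝ, c x = Real.exp (2 * (α + β))) := by
  have hconf : IsConformalDiagonal (p + q) (by omega) (q - 2) d c := h
  obtain ⟨α, β, h₀, h₁, h₂, h₃, hfactor⟩ := exists_phiDiag_of_mul_eq (hd _) (hd _) (hd _) (hd _)
    ((hconf.factor_eq_mul_two_three 0).symm.trans (hconf.factor_eq_mul_zero_one 0))
    (hconf.sq_mul_zero_two_eq_factor.trans (hconf.factor_eq_mul_zero_one 1))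
  refine ⟨α, β, fun j => ?_, fun x => (hconf.factor_eq_mul_zero_one x).trans hfactor⟩
  rcases j with ⟨_ | _ | _ | _ | k, hk⟩
  · exact h₀
  · exact h₁
  · exact h₂
  · exact h₃
  · rw [Fin.val_mk, phiDiag_of_four_le α β (by omega)]
    refine eq_exp_of_sq_eq_exp (hd _) ?_
    rw [hconf.sq_eq_factor_of_four_le 0 _ (by simp), hconf.factor_eq_mul_zero_one, hfactor]
end

section
/- For every λ ∈ Λ, the ℤ-action on ℝⁿ ∖ {0} defined by k • x = φ_λ^k x is free (if φ_λ^k x = x for some x ≠ 0 then k = 0) and properly discontinuous (for every compact set K ⊆ ℝⁿ ∖ {0}, the set {k ∈ ℤ : φ_λ^k(K) ∩ K ≠ ∅} is finite). -/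
/-- The `k`-th iterate (`k ∈ ℤ`) of the diagonal map `φ_λ` on `ℝⁿ`:
the diagonal map with entries `(phiDiag α β j)^k`. This is the `ℤ`-action `k • x = φ_λ^k x`. -/
noncomputable def phiIter (n : ℕ) (α β : ℝ) (k : ℤ) (x : Fin n → ℝ) : Fin n → ℝ :=
  fun j => phiDiag α β (j : ℕ) ^ k * x j

noncomputable def qval (α β : ℝ) : ℝ :=
  Real.exp (max (max (-α + 2 * β) (3 * α)) (max (2 * α - β) (max (3 * β) (α + β))))

lemma phiDiag_pos (α β : ℝ) (j : ℕ) : 0 < phiDiag α β j := by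
  unfold phiDiag; split_ifs <;> exact Real.exp_pos _

lemma phiDiag_le_qval (α β : ℝ) (j : ℕ) : phiDiag α β j ≤ qval α β := by
  unfold phiDiag qval
  split_ifs <;> exact Real.exp_le_exp.2 (by simp [le_max_iff])

lemma qval_lt_one {α β : ℝ} (h1 : α < β) (h2 : β < α / 2) (h3 : α / 2 < 0) :
    qval α β < 1 := by
  have : max (max (-α + 2 * β) (3 * α)) (max (2 * α - β) (max (3 * β) (α + β))) < 0 := by
    simp only [max_lt_iff]
    refine ⟨⟨by linarith, by linarith⟩, by linarith, by linarith, by linarith⟩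
  calc qval α β < Real.exp 0 := Real.exp_lt_exp.2 this
    _ = 1 := Real.exp_zero

lemma phiDiag_lt_one {α β : ℝ} (h1 : α < β) (h2 : β < α / 2) (h3 : α / 2 < 0) (j : ℕ) :
    phiDiag α β j < 1 :=
  lt_of_le_of_lt (phiDiag_le_qval α β j) (qval_lt_one h1 h2 h3)

lemma phiIter_inv (n : ℕ) (α β : ℝ) (k : ℤ) (x : Fin n → ℝ) :
    phiIter n α β (-k) (phiIter n α β k x) = x := by
  funext j
  have hp := (phiDiag_pos α β (j : ℕ)).ne'
  simp only [phiIter, ← mul_assoc, ← zpow_add₀ hp]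
  simp

lemma norm_phiIter_le {α β : ℝ} (n : ℕ) (m : ℕ) (x : Fin n → ℝ) :
    ‖phiIter n α β (m : ℤ) x‖ ≤ qval α β ^ m * ‖x‖ := by
  have hq0 : 0 < qval α β := Real.exp_pos _
  refine (pi_norm_le_iff_of_nonneg (by positivity)).2 fun j => ?_
  have hd0 := phiDiag_pos α β (j : ℕ)
  calc ‖phiIter n α β (m : ℤ) x j‖ = phiDiag α β (j : ℕ) ^ m * |x j| := by
        simp only [phiIter, zpow_natCast]
        rw [Real.norm_eq_abs, abs_mul, abs_of_pos (pow_pos hd0 _)]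
    _ ≤ qval α β ^ m * ‖x‖ := by
        apply mul_le_mul
        · exact pow_le_pow_left₀ hd0.le (phiDiag_le_qval α β _) _
        · exact norm_le_pi_norm x j
        · exact abs_nonneg _
        · positivity

/-- For `λ ∈ Λ`, the `ℤ`-action `k • x = φ_λ^k x` on `ℝⁿ ∖ {0}` is free and
properly discontinuous. -/
theorem phi_action_free_properly_discontinuous (n : ℕ) (hn : 4 ≤ n) (α β : ℝ)
    (h1 : α < β) (h2 : β < α / 2) (h3 : α / 2 < 0) :
    (∀ (k : ℤ) (x : Fin n → ℝ), x ≠ 0 → phiIter n α β k x = x → k = 0) ∧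
    (∀ K : Set (Fin n → ℝ), K ⊆ {x | x ≠ 0} → IsCompact K →
      {k : ℤ | (phiIter n α β k '' K ∩ K).Nonempty}.Finite) := by
  have hq1 : qval α β < 1 := qval_lt_one h1 h2 h3
  have hq0 : 0 < qval α β := Real.exp_pos _
  constructor
  · intro k x hx hfix
    obtain ⟨j, hj⟩ := Function.ne_iff.1 hx
    have hxj : x j ≠ 0 := by simpa using hj
    have h := congrFun hfix j
    simp only [phiIter] at h
    have hd : phiDiag α β (j : ℕ) ^ k = 1 :=
      mul_right_cancel₀ hxj (by rw [one_mul]; exact h)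
    have := zpow_right_injective₀ (phiDiag_pos α β (j : ℕ))
      (ne_of_lt (phiDiag_lt_one h1 h2 h3 (j : ℕ)))
    have h0 : phiDiag α β (j : ℕ) ^ k = phiDiag α β (j : ℕ) ^ (0 : ℤ) := by
      simpa using hd
    exact this h0
  · intro K hK hKc
    rcases K.eq_empty_or_nonempty with rfl | hne
    · simp
    obtain ⟨x₀, hx₀, hmin'⟩ := hKc.exists_isMinOn hne continuous_norm.continuousOn
    obtain ⟨x₁, hx₁, hmax'⟩ := hKc.exists_isMaxOn hne continuous_norm.continuousOn
    have hmin : ∀ y ∈ K, ‖x₀‖ ≤ ‖y‖ := fun y hy => hmin' hy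
    have hmax : ∀ y ∈ K, ‖y‖ ≤ ‖x₁‖ := fun y hy => hmax' hy
    set ε := ‖x₀‖ with hε
    set M := ‖x₁‖ with hM
    have hε0 : 0 < ε := norm_pos_iff.2 (hK hx₀)
    have hM0 : 0 < M := lt_of_lt_of_le hε0 (hmin x₁ hx₁)
    obtain ⟨N, hN⟩ := exists_pow_lt_of_lt_one (div_pos hε0 hM0) hq1
    -- key: for any k in the set, q ^ k.natAbs * M ≥ ε
    have key : ∀ k ∈ {k : ℤ | (phiIter n α β k '' K ∩ K).Nonempty},
        ε ≤ qval α β ^ k.natAbs * M := by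
      intro k hk
      obtain ⟨y, ⟨x, hxK, rfl⟩, hyK⟩ := hk
      rcases le_or_gt 0 k with hk0 | hk0
      · have hkeq : k = ((k.natAbs : ℕ) : ℤ) := by omega
        have := norm_phiIter_le (α := α) (β := β) n k.natAbs x
        rw [← hkeq] at this
        calc ε ≤ ‖phiIter n α β k x‖ := hmin _ hyK
          _ ≤ qval α β ^ k.natAbs * ‖x‖ := this
          _ ≤ qval α β ^ k.natAbs * M :=
              mul_le_mul_of_nonneg_left (hmax x hxK) (by positivity)
      · have hinv : phiIter n α β (-k) (phiIter n α β k x) = x := phiIter_inv n α β k x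
        have hkeq : -k = ((k.natAbs : ℕ) : ℤ) := by omega
        have := norm_phiIter_le (α := α) (β := β) n k.natAbs (phiIter n α β k x)
        rw [← hkeq, hinv] at this
        calc ε ≤ ‖x‖ := hmin _ hxK
          _ ≤ qval α β ^ k.natAbs * ‖phiIter n α β k x‖ := this
          _ ≤ qval α β ^ k.natAbs * M :=
              mul_le_mul_of_nonneg_left (hmax _ hyK) (by positivity)
    apply Set.Finite.subset (Set.finite_Icc (-(N : ℤ)) N)
    intro k hk
    have hkey := key k hk
    have hlt : k.natAbs < N := by
      by_contra hcon
      push_neg at hcon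
      have : qval α β ^ k.natAbs ≤ qval α β ^ N :=
        pow_le_pow_of_le_one hq0.le hq1.le hcon
      have : qval α β ^ k.natAbs * M < ε := by
        calc qval α β ^ k.natAbs * M ≤ qval α β ^ N * M :=
              mul_le_mul_of_nonneg_right this hM0.le
          _ < (ε / M) * M := by exact mul_lt_mul_of_pos_right hN hM0
          _ = ε := by field_simp
      linarith
    constructor <;> omega
end
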